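/- Let f : ℝ → ℝ_{>0} be Borel measurable and locally integrable. For each T > 0 define ϱ_{1/T}(t) = f(T-t)·1_{[0,T]}(t) / ∫₀^T f(T-τ) dτ. Then each ϱ_{1/T} is a probability density, and the family (ϱ_λ)_{λ>0} is self-similar: for each λ = 1/T and r ∈ (0,1), ϱ_{1/T}(t + q[ϱ_{1/T}](r)) = (1-r)·ϱ_{1/(T - q[ϱ_{1/T}](r))}(t) for all t ≥ 0. -/
import Mathlib


open MeasureTheory

/-- The self-similar family built from a positive function `f`:
`ϱ_{1/T}(t) = f(T-t)·1_{[0,T]}(t) / ∫₀^T f(T-τ) dτ`, parametrized here by `T`. -/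
noncomputable def famDensity (f : ℝ → ℝ) (T t : ℝ) : ℝ :=
  Set.indicator (Set.Icc 0 T) (fun s => f (T - s)) t / ∫ τ in (0:ℝ)..T, f (T - τ)

/-- For every Borel measurable, locally integrable `f : ℝ → ℝ_{>0}`, each `ϱ_{1/T}`
is a probability density, and the family is self-similar:
`ϱ_{1/T}(t + q[ϱ_{1/T}](r)) = (1-r)·ϱ_{1/(T - q[ϱ_{1/T}](r))}(t)` for `t ≥ 0`. -/
theorem famDensity_self_similar (f : ℝ → ℝ) (hf : ∀ x, 0 < f x) (hmeas : Measurable f)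
    (hloc : LocallyIntegrable f) :
    ∀ T : ℝ, 0 < T →
      (∀ t, 0 ≤ famDensity f T t) ∧
      (∫ t in Set.Ioi (0:ℝ), famDensity f T t) = 1 ∧
      ∀ r ∈ Set.Ioo (0:ℝ) 1, ∀ q : ℝ,
        IsLeast {S : ℝ | 0 ≤ S ∧ (∫ t in (0:ℝ)..S, famDensity f T t) = r} q →
        ∀ t, 0 ≤ t → famDensity f T (t + q) = (1 - r) * famDensity f (T - q) t := by
  -- interval integrability of f on any interval
  have hfi : ∀ a b : ℝ, IntervalIntegrable f volume a b := fun a b =>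
    (hloc.integrableOn_isCompact isCompact_uIcc).intervalIntegrable
  -- normalization constant equals ∫₀^a f for every a
  have hconst : ∀ a : ℝ, (∫ τ in (0:ℝ)..a, f (a - τ)) = ∫ u in (0:ℝ)..a, f u := by
    intro a
    rw [intervalIntegral.integral_comp_sub_left f a]
    simp
  intro T hT
  set c : ℝ := ∫ τ in (0:ℝ)..T, f (T - τ) with hc
  have hcc : c = ∫ u in (0:ℝ)..T, f u := hconst T
  have hcpos : 0 < c := by
    rw [hcc]
    exact intervalIntegral.intervalIntegral_pos_of_pos (hfi 0 T) hf hT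
  set g : ℝ → ℝ := Set.indicator (Set.Icc 0 T) (fun s => f (T - s)) with hg
  have hgnn : ∀ t, 0 ≤ g t := fun t => Set.indicator_nonneg (fun s _ => (hf _).le) t
  -- f (T - ·) interval integrable
  have hfTi : ∀ a b : ℝ, IntervalIntegrable (fun s => f (T - s)) volume a b := by
    intro a b
    have h := (hfi (T - a) (T - b)).comp_sub_left T
    rwa [sub_sub_cancel, sub_sub_cancel] at h
  have hgint : Integrable g volume := by
    rw [hg]
    exact ((intervalIntegrable_iff_integrableOn_Icc_of_le hT.le).mp
      (hfTi 0 T)).integrable_indicator measurableSet_Icc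
  have hgii : ∀ a b : ℝ, IntervalIntegrable g volume a b := fun a b =>
    hgint.intervalIntegrable
  -- famDensity f T t = g t / c
  have hfd : ∀ t, famDensity f T t = g t / c := fun t => rfl
  refine ⟨fun t => div_nonneg (hgnn t) hcpos.le, ?_, ?_⟩
  · -- integral over Ioi 0 equals 1
    have : (∫ t in Set.Ioi (0:ℝ), famDensity f T t) = (∫ t in Set.Ioi (0:ℝ), g t) / c := by
      simp_rw [hfd]
      exact integral_div c _
    rw [this]
    have h1 : (∫ t in Set.Ioi (0:ℝ), g t) = ∫ t in Set.Ioi (0:ℝ) ∩ Set.Icc 0 T,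
        f (T - t) := by
      rw [hg, setIntegral_indicator measurableSet_Icc]
    have h2 : Set.Ioi (0:ℝ) ∩ Set.Icc 0 T = Set.Ioc 0 T := by
      ext x; simp only [Set.mem_inter_iff, Set.mem_Ioi, Set.mem_Icc, Set.mem_Ioc]
      constructor
      · rintro ⟨h, _, h2⟩; exact ⟨h, h2⟩
      · rintro ⟨h1, h2⟩; exact ⟨h1, h1.le, h2⟩
    have h3 : (∫ t in Set.Ioc (0:ℝ) T, f (T - t)) = ∫ t in (0:ℝ)..T, f (T - t) := by
      rw [intervalIntegral.integral_of_le hT.le]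
    rw [h1, h2, h3, ← hc, div_self hcpos.ne']
  · -- self-similarity
    rintro r ⟨hr0, hr1⟩ q ⟨⟨hq0, hqr⟩, -⟩ t ht
    -- ∫₀^S famDensity = (∫₀^S g)/c
    have hFq : (∫ s in (0:ℝ)..q, g s) = r * c := by
      have : (∫ s in (0:ℝ)..q, famDensity f T s) = (∫ s in (0:ℝ)..q, g s) / c := by
        simp_rw [hfd]
        exact intervalIntegral.integral_div c _
      rw [this] at hqr
      field_simp at hqr
      linarith [hqr]
    -- q < T
    have hqT : q < T := by
      by_contra h
      push_neg at h
      have hsplit : (∫ s in (0:ℝ)..q, g s)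
          = (∫ s in (0:ℝ)..T, g s) + ∫ s in T..q, g s :=
        (intervalIntegral.integral_add_adjacent_intervals (hgii 0 T) (hgii T q)).symm
      have hzero : (∫ s in T..q, g s) = 0 := by
        rw [intervalIntegral.integral_of_le h]
        apply setIntegral_eq_zero_of_forall_eq_zero
        intro x hx
        exact Set.indicator_of_notMem (by simp [Set.mem_Icc]; intro _; exact hx.1) _
      have hgeqT : (∫ s in (0:ℝ)..T, g s) = c := by
        rw [hg]
        have : Set.EqOn (Set.indicator (Set.Icc 0 T) (fun s => f (T - s)))
            (fun s => f (T - s)) (Set.uIcc 0 T) := by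
          intro x hx
          rw [Set.uIcc_of_le hT.le] at hx
          exact Set.indicator_of_mem hx _
        rw [intervalIntegral.integral_congr this, ← hc]
      rw [hsplit, hzero, hgeqT, add_zero] at hFq
      nlinarith
    -- on [0,q] the indicator is trivial
    have hgeq : (∫ s in (0:ℝ)..q, g s) = ∫ s in (0:ℝ)..q, f (T - s) := by
      apply intervalIntegral.integral_congr
      intro x hx
      rw [Set.uIcc_of_le hq0] at hx
      exact Set.indicator_of_mem (Set.mem_Icc.mpr ⟨hx.1, hx.2.trans hqT.le⟩) _
    -- ∫₀^{T-q} f = (1-r)c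
    have hkey : (∫ u in (0:ℝ)..(T - q), f u) = (1 - r) * c := by
      have h1 : (∫ s in (0:ℝ)..q, f (T - s)) = ∫ u in (T - q)..T, f u := by
        rw [intervalIntegral.integral_comp_sub_left f T]
        simp
      have h2 : (∫ u in (0:ℝ)..T, f u) - (∫ u in (0:ℝ)..(T - q), f u)
          = ∫ u in (T - q)..T, f u :=
        intervalIntegral.integral_interval_sub_left (hfi 0 T) (hfi 0 (T - q))
      have := hFq
      rw [hgeq, h1, ← h2, ← hcc] at this
      linarith
    -- denominator of famDensity f (T-q)
    have hden : (∫ τ in (0:ℝ)..(T - q), f (T - q - τ)) = (1 - r) * c := by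
      rw [hconst (T - q), hkey]
    -- finish
    rw [famDensity, famDensity, hden, ← hc]
    have harg : T - (t + q) = T - q - t := by ring
    by_cases hmem : t ≤ T - q
    · rw [Set.indicator_of_mem (Set.mem_Icc.mpr ⟨by positivity, by linarith⟩) _,
        Set.indicator_of_mem (Set.mem_Icc.mpr ⟨ht, hmem⟩) _]
      rw [harg, ← mul_div_assoc, mul_div_mul_left _ _ (by linarith : (1:ℝ) - r ≠ 0)]
    · rw [Set.indicator_of_notMem (by simp [Set.mem_Icc]; intro _; linarith) _,
        Set.indicator_of_notMem (by simp [Set.mem_Icc]; intro _; linarith) _]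
      simp
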